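/- arXiv:2602.03807 — 8 statements merged into one kernel-verified Lean document; each statement's English description precedes it below -/
import Mathlib

section
/- Let Γ be a graph with weight function ω into ℤ_k, let W be a closed walk of even length in Γ, and let a be the order of ω(W) in ℤ_k. For any i ∈ ℤ_k and b ∈ ℤ, the lift of W^b in the cross-cover Γ^ω based at (u_0, i) is a closed walk if and only if a divides b. -/
/-- The alternating weight of a walk. -/
def altWeight {V : Type*} {k : ℕ} {Γ : SimpleGraph V} (ω : Sym2 V → ZMod k) :
    ∀ {u v : V}, Γ.Walk u v → ZMod k
  | _, _, SimpleGraph.Walk.nil => 0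
  | _, _, @SimpleGraph.Walk.cons _ _ a b _ _ q => ω s(a, b) - altWeight ω q

/-- The second coordinate of the final vertex of the lift, in the cross-cover `Γ^ω`,
of a walk based at a vertex `(u₀, i)`: each step along an edge `e` sends the fibre
coordinate `i` to `ω(e) - i`. -/
def liftEnd {V : Type*} {k : ℕ} {Γ : SimpleGraph V} (ω : Sym2 V → ZMod k) :
    ∀ {u v : V}, Γ.Walk u v → ZMod k → ZMod k
  | _, _, SimpleGraph.Walk.nil, i => i
  | _, _, @SimpleGraph.Walk.cons _ _ a b _ _ q, i => liftEnd ω q (ω s(a, b) - i)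

/-- The `b`-fold concatenation `W^b` of a closed walk `W` with itself. -/
def wpow {V : Type*} {Γ : SimpleGraph V} {u : V} (p : Γ.Walk u u) : ℕ → Γ.Walk u u
  | 0 => SimpleGraph.Walk.nil
  | b + 1 => p.append (wpow p b)

lemma liftEnd_append {V : Type*} {k : ℕ} {Γ : SimpleGraph V} (ω : Sym2 V → ZMod k) :
    ∀ {u v w : V} (p : Γ.Walk u v) (q : Γ.Walk v w) (i : ZMod k),
      liftEnd ω (p.append q) i = liftEnd ω q (liftEnd ω p i)
  | _, _, _, SimpleGraph.Walk.nil, q, i => rfl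
  | _, _, _, SimpleGraph.Walk.cons h p, q, i => liftEnd_append ω p q _

lemma liftEnd_eq {V : Type*} {k : ℕ} {Γ : SimpleGraph V} (ω : Sym2 V → ZMod k) :
    ∀ {u v : V} (p : Γ.Walk u v) (i : ZMod k),
      liftEnd ω p i = if Even p.length then i - altWeight ω p else altWeight ω p - i
  | _, _, SimpleGraph.Walk.nil, i => by simp [liftEnd, altWeight]
  | _, _, @SimpleGraph.Walk.cons _ _ a b _ h q, i => by
      rw [liftEnd, liftEnd_eq ω q]
      simp only [SimpleGraph.Walk.length_cons, Nat.even_add_one, altWeight]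
      by_cases he : Even q.length <;> simp [he] <;> ring

lemma liftEnd_wpow {V : Type*} {k : ℕ} {Γ : SimpleGraph V} (ω : Sym2 V → ZMod k)
    {u : V} (p : Γ.Walk u u) (hEven : Even p.length) (i : ZMod k) (b : ℕ) :
    liftEnd ω (wpow p b) i = i - b • altWeight ω p := by
  induction b generalizing i with
  | zero => simp [wpow, liftEnd]
  | succ n ih =>
      rw [wpow, liftEnd_append, liftEnd_eq ω p, if_pos hEven, ih, succ_nsmul]
      ring

/-- Let `W` be a closed walk of even length and let `a` be the (additive) order of
`ω(W)` in `ℤ_k`.  For any `i ∈ ℤ_k` and `b`, the lift of `W^b` based at `(u₀, i)`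
is a closed walk (i.e. ends at `(u₀, i)`) if and only if `a ∣ b`. -/
theorem lift_even_closed_iff {V : Type*} {k : ℕ} {Γ : SimpleGraph V}
    (ω : Sym2 V → ZMod k) {u : V} (p : Γ.Walk u u) (hEven : Even p.length)
    (i : ZMod k) (b : ℕ) :
    liftEnd ω (wpow p b) i = i ↔ addOrderOf (altWeight ω p) ∣ b := by
  rw [liftEnd_wpow ω p hEven, sub_eq_self, addOrderOf_dvd_iff_nsmul_eq_zero]
end

section
/- Let Γ be a connected graph with weight function ω into ℤ_k, and suppose Γ contains a cycle C of even length with gcd(ω(C), k) = 1. Then the cross-cover Γ^ω is connected. -/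
/-- The cross-cover `Γ^ω`: vertex set `V × ℤ_k`, with `(u,i)` adjacent to
`(v, ω(e) - i)` for each edge `e = uv` and each `i ∈ ℤ_k`. -/
def crossCover {V : Type*} {k : ℕ} (Γ : SimpleGraph V) (ω : Sym2 V → ZMod k) :
    SimpleGraph (V × ZMod k) where
  Adj p q := Γ.Adj p.1 q.1 ∧ p.2 + q.2 = ω s(p.1, q.1)
  symm := ⟨by
    rintro ⟨u, i⟩ ⟨v, j⟩ ⟨h, he⟩
    refine ⟨h.symm, ?_⟩
    rw [add_comm, Sym2.eq_swap]
    exact he⟩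
  loopless := ⟨by
    rintro ⟨u, i⟩ ⟨h, _⟩
    exact Γ.irrefl h⟩

/-! Every closed walk of even length through `u` shifts the fibre over `u` by minus its weight, so
an even cycle whose weight is a unit of `ℤ_k` joins the whole fibre over `u`; since every vertex
of `Γ^ω` lies over a vertex joined to `u` in `Γ`, it is joined to that fibre. -/

namespace ZMod

theorem isUnit_of_coprime_val {k : ℕ} (a : ZMod k) (h : a.val.Coprime k) : IsUnit a := by
  rcases k with - | k
  · exact val_unit'.mpr (Nat.coprime_zero_right _ |>.mp h)
  · simpa using (isUnit_iff_coprime a.val (k + 1)).mpr h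

theorem addSubgroup_eq_top_of_isUnit_mem {k : ℕ} {H : AddSubgroup (ZMod k)} {a : ZMod k}
    (ha : IsUnit a) (haH : a ∈ H) : H = ⊤ := by
  obtain ⟨b, rfl⟩ := ha
  refine eq_top_iff.mpr fun d _ => ?_
  obtain ⟨z, hz⟩ := intCast_surjective (n := k) (d * ↑b⁻¹)
  have hd : d = z • (b : ZMod k) := by
    rw [zsmul_eq_mul, hz, mul_assoc, Units.inv_mul, mul_one]
  exact hd ▸ H.zsmul_mem haH z

end ZMod

namespace SimpleGraph

section FiberShifts

variable {V A : Type*} [AddGroup A]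

def fiberShifts (G : SimpleGraph (V × A)) (u : V) : AddSubgroup A where
  carrier := {d | ∀ i, G.Reachable (u, i) (u, i + d)}
  zero_mem' i := by simp
  add_mem' {c d} hc hd i := (hc i).trans (by simpa [add_assoc] using hd (i + c))
  neg_mem' {d} hd i := by simpa using (hd (i + -d)).symm

theorem reachable_of_fiberShifts_eq_top {G : SimpleGraph (V × A)} {u : V}
    (h : G.fiberShifts u = ⊤) (i j : A) : G.Reachable (u, i) (u, j) := by
  simpa using (show -i + j ∈ G.fiberShifts u from h ▸ AddSubgroup.mem_top _) i

end FiberShifts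

variable {V : Type*} {k : ℕ} {Γ : SimpleGraph V} (ω : Sym2 V → ZMod k)

theorem Walk.reachable_crossCover {u v : V} (q : Γ.Walk u v) (i : ZMod k) :
    (crossCover Γ ω).Reachable (u, i) (v, (-1) ^ q.length * (i - altWeight ω q)) := by
  induction q generalizing i with
  | nil => simp [altWeight]
  | @cons a b c h q ih =>
    have hab : (crossCover Γ ω).Adj (a, i) (b, ω s(a, b) - i) := ⟨h, by ring⟩
    convert hab.reachable.trans (ih (ω s(a, b) - i)) using 2
    simp only [Walk.length_cons, altWeight]
    ring

theorem neg_altWeight_mem_fiberShifts {u : V} (p : Γ.Walk u u) (hp : Even p.length) :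
    -altWeight ω p ∈ (crossCover Γ ω).fiberShifts u := fun i => by
  simpa [hp.neg_one_pow, sub_eq_add_neg] using p.reachable_crossCover ω i

end SimpleGraph

theorem crossCover_connected_general {V : Type*} {k : ℕ} {Γ : SimpleGraph V}
    (ω : Sym2 V → ZMod k) (hconn : Γ.Connected) {u : V} (p : Γ.Walk u u)
    (hEven : Even p.length)
    (hgcd : Nat.gcd (altWeight ω p).val k = 1) :
    (crossCover Γ ω).Connected := by
  have hunit : IsUnit (-altWeight ω p) := (ZMod.isUnit_of_coprime_val _ hgcd).neg
  have hfiber : (crossCover Γ ω).fiberShifts u = ⊤ :=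
    ZMod.addSubgroup_eq_top_of_isUnit_mem hunit
      (SimpleGraph.neg_altWeight_mem_fiberShifts ω p hEven)
  have hbase : ∀ x : V × ZMod k, (crossCover Γ ω).Reachable x (u, 0) := by
    rintro ⟨v, i⟩
    obtain ⟨q⟩ := hconn.preconnected v u
    exact (q.reachable_crossCover ω i).trans
      (SimpleGraph.reachable_of_fiberShifts_eq_top hfiber _ _)
  have : Nonempty (V × ZMod k) := ⟨(u, 0)⟩
  exact ⟨fun x y => (hbase x).trans (hbase y).symm⟩

/-- If `Γ` is connected and contains a cycle `C` of even length with
`gcd(ω(C), k) = 1`, then the cross-cover `Γ^ω` is connected. -/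
theorem crossCover_connected {V : Type*} {k : ℕ} {Γ : SimpleGraph V}
    (ω : Sym2 V → ZMod k) (hconn : Γ.Connected) {u : V} (p : Γ.Walk u u)
    (hcyc : p.IsCycle) (hEven : Even p.length)
    (hgcd : Nat.gcd (altWeight ω p).val k = 1) :
    (crossCover Γ ω).Connected :=
  crossCover_connected_general ω hconn p hEven hgcd
end

section
/- Let M be an n-maniplex with weight function ω into ℤ_k. The cross-cover M^ω (with edges coloured as their projections) satisfies the string property if and only if ω(C) = 0 for every 4-cycle C of M of alternating non-consecutive colours. -/
/-- A maniplex of rank `n` in permutation form: a flag set `F` together with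
fixed-point-free involutions `r i` (the `i`-adjacency maps, giving a proper
`n`-edge-colouring of an `n`-valent graph), satisfying the string property
(for non-consecutive colours `i, j` the maps commute and the `{i,j}`-subgraph
has no multiple edges, so that it is a disjoint union of 4-cycles), and
connectivity. -/
structure Maniplex (n : ℕ) (F : Type*) where
  r : Fin n → F → F
  invol : ∀ i u, r i (r i u) = u
  free : ∀ i u, r i u ≠ u
  stringComm : ∀ i j : Fin n, (i : ℕ) + 1 < (j : ℕ) → ∀ u, r i (r j u) = r j (r i u)
  stringNe : ∀ i j : Fin n, (i : ℕ) + 1 < (j : ℕ) → ∀ u, r i u ≠ r j u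
  conn : ∀ u v : F, ∃ l : List (Fin n), l.foldl (fun w i => r i w) u = v

/-- The flag reached from `u` by following the walk whose successive edge
colours are listed in `l`. -/
def walkEnd {n : ℕ} {F : Type*} (M : Maniplex n F) (l : List (Fin n)) (u : F) : F :=
  l.foldl (fun w i => M.r i w) u

/-- The alternating weight `Σ (-1)^t ω(e_t)` of the walk starting at `u` whose
successive edge colours are listed in `l`. -/
def walkWeight {n k : ℕ} {F : Type*} (M : Maniplex n F) (ω : Fin n → F → ZMod k) :
    List (Fin n) → F → ZMod k
  | [], _ => 0
  | i :: t, u => ω i u - walkWeight M ω t (M.r i u)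

/-- The `i`-adjacency map of the cross-cover `M^ω`: flags `F × ℤ_k`, with
`(u, a)` being `i`-adjacent to `(r i u, ω_i(u) - a)`. -/
def coverMap {n k : ℕ} {F : Type*} (M : Maniplex n F) (ω : Fin n → F → ZMod k)
    (i : Fin n) : F × ZMod k → F × ZMod k :=
  fun p => (M.r i p.1, ω i p.1 - p.2)

/-- The cross-cover `M^ω` of an `n`-maniplex (edges coloured as their
projections) satisfies the string property (for each pair of non-consecutive
colours, the adjacency maps commute and give no multiple edges, so the
bicoloured subgraph is a disjoint union of 4-cycles) if and only if
`ω(C) = 0` for every 4-cycle `C` of `M` of alternating non-consecutive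
colours. -/
theorem coverString_iff_fourCycles {n k : ℕ} {F : Type*} (M : Maniplex n F)
    (ω : Fin n → F → ZMod k) (hω : ∀ i u, ω i (M.r i u) = ω i u) :
    (∀ i j : Fin n, (i : ℕ) + 1 < (j : ℕ) → ∀ p : F × ZMod k,
        coverMap M ω i (coverMap M ω j p) = coverMap M ω j (coverMap M ω i p) ∧
        coverMap M ω i p ≠ coverMap M ω j p) ↔
      (∀ i j : Fin n, (i : ℕ) + 1 < (j : ℕ) → ∀ u : F,
        walkWeight M ω [i, j, i, j] u = 0) := by
  constructor
  · intro h i j hij u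
    have hc := M.stringComm i j hij u
    have h1 : M.r i (M.r j (M.r i u)) = M.r j u := by rw [← hc, M.invol]
    have h2 := (h i j hij (u, 0)).1
    simp only [coverMap, Prod.mk.injEq] at h2
    simp only [walkWeight, ← hc, M.invol, hω, h1]
    linear_combination h2.2
  · intro h i j hij p
    obtain ⟨u, a⟩ := p
    have hc := M.stringComm i j hij u
    have h1 : M.r i (M.r j (M.r i u)) = M.r j u := by rw [← hc, M.invol]
    have h2 := h i j hij u
    simp only [walkWeight, ← hc, M.invol, hω, h1] at h2
    refine ⟨?_, ?_⟩
    · simp only [coverMap, Prod.mk.injEq]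
      exact ⟨hc, by linear_combination h2⟩
    · intro heq
      exact M.stringNe i j hij u (congrArg Prod.fst heq)
end

section
/- Let M be an n-maniplex with weight function ω into ℤ_k, k ≥ 3, such that M^ω is a maniplex. Suppose M contains a closed walk W of odd length with ω(W) even. Then M^ω is not a regular maniplex, i.e., its colour-preserving automorphism group is not transitive on vertices. -/

lemma fold_cover {n k : ℕ} {F : Type*} (M : Maniplex n F) (ω : Fin n → F → ZMod k) :
    ∀ (l : List (Fin n)) (u : F) (a : ZMod k),
      l.foldl (fun x i => coverMap M ω i x) (u, a)
        = (walkEnd M l u, (-1) ^ l.length * (a - walkWeight M ω l u)) := by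
  intro l
  induction l with
  | nil => intro u a; simp [walkEnd, walkWeight]
  | cons i t ih =>
    intro u a
    simp only [List.foldl_cons]
    have hc : coverMap M ω i (u, a) = (M.r i u, ω i u - a) := rfl
    rw [hc, ih]
    refine Prod.ext rfl ?_
    simp only [walkWeight, List.length_cons, pow_succ]
    ring

lemma fold_comm {n k : ℕ} {F : Type*} (M : Maniplex n F) (ω : Fin n → F → ZMod k)
    (g : Equiv.Perm (F × ZMod k))
    (hcomm : ∀ (i : Fin n) (x : F × ZMod k), g (coverMap M ω i x) = coverMap M ω i (g x)) :
    ∀ (l : List (Fin n)) (p : F × ZMod k),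
      g (l.foldl (fun x i => coverMap M ω i x) p)
        = l.foldl (fun x i => coverMap M ω i x) (g p) := by
  intro l
  induction l with
  | nil => intro p; simp
  | cons i t ih =>
    intro p
    simp only [List.foldl_cons]
    rw [ih, hcomm]

/-- Let `M` be an `n`-maniplex with a weight function `ω` into `ℤ_k`, `k ≥ 3`,
such that the cross-cover `M^ω` is a maniplex (connected and with the string
property).  If `M` contains a closed walk of odd length whose weight is even,
then `M^ω` is not regular: its group of colour-preserving automorphisms (the
permutations commuting with all the adjacency maps) is not transitive on
flags. -/
theorem crossCover_not_regular {n k : ℕ} {F : Type*} (M : Maniplex n F)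
    (ω : Fin n → F → ZMod k) (hk : 3 ≤ k)
    (hω : ∀ i u, ω i (M.r i u) = ω i u)
    (hconn : ∀ p q : F × ZMod k,
      ∃ l : List (Fin n), l.foldl (fun x i => coverMap M ω i x) p = q)
    (hstring : ∀ i j : Fin n, (i : ℕ) + 1 < (j : ℕ) → ∀ p : F × ZMod k,
        coverMap M ω i (coverMap M ω j p) = coverMap M ω j (coverMap M ω i p) ∧
        coverMap M ω i p ≠ coverMap M ω j p)
    (hwalk : ∃ (u : F) (l : List (Fin n)), Odd l.length ∧ walkEnd M l u = u ∧
      ∃ t : ZMod k, walkWeight M ω l u = t + t) :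
    ¬ (∀ p q : F × ZMod k, ∃ g : Equiv.Perm (F × ZMod k),
        (∀ (i : Fin n) (x : F × ZMod k), g (coverMap M ω i x) = coverMap M ω i (g x)) ∧
        g p = q) := by
  obtain ⟨u, l, hodd, hend, t, hw⟩ := hwalk
  intro htrans
  have h2 : (2 : ZMod k) ≠ 0 := by
    have : NeZero k := ⟨by omega⟩
    intro h
    have : (k : ℕ) ∣ 2 := by
      have := (ZMod.natCast_eq_zero_iff 2 k).mp (by exact_mod_cast h)
      exact this
    have := Nat.le_of_dvd (by norm_num) this
    omega
  have hneg : ((-1 : ZMod k)) ^ l.length = -1 := Odd.neg_one_pow hodd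
  have hfix : l.foldl (fun x i => coverMap M ω i x) (u, t) = (u, t) := by
    rw [fold_cover, hend, hw, hneg]; ring_nf
  have hmove : l.foldl (fun x i => coverMap M ω i x) (u, t + 1) = (u, t - 1) := by
    rw [fold_cover, hend, hw, hneg]; refine Prod.ext rfl ?_; ring
  obtain ⟨g, hcomm, hg⟩ := htrans (u, t) (u, t + 1)
  have := fold_comm M ω g hcomm l (u, t)
  rw [hfix, hg, hmove] at this
  have h1 : t + 1 = t - 1 := congrArg Prod.snd this
  apply h2
  have : (t + 1) - (t - 1) = 0 := by rw [h1]; ring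
  calc (2 : ZMod k) = (t + 1) - (t - 1) := by ring
    _ = 0 := this
end

section
/- Every regular non-orientable maniplex M is stable: every colour-preserving automorphism of its canonical double cover is of the form (u,j) ↦ (φ(u), j+a) for some automorphism φ of M and some a ∈ ℤ_2, and hence Aut(M̃) ≅ Aut(M) × ℤ_2. -/
/-- The `i`-adjacency map of the canonical double cover `M̃`: flags `F × ℤ_2`,
with `(u, j)^i = (u^i, j + 1)`. -/
def doubleMap {n : ℕ} {F : Type*} (M : Maniplex n F) (i : Fin n) :
    F × ZMod 2 → F × ZMod 2 :=
  fun p => (M.r i p.1, p.2 + 1)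

def dWalkEnd {n : ℕ} {F : Type*} (M : Maniplex n F) (l : List (Fin n))
    (p : F × ZMod 2) : F × ZMod 2 :=
  l.foldl (fun w i => doubleMap M i w) p

theorem walkEnd_append {n : ℕ} {F : Type*} (M : Maniplex n F) (l l' : List (Fin n)) (u : F) :
    walkEnd M (l ++ l') u = walkEnd M l' (walkEnd M l u) := by
  simp [walkEnd, List.foldl_append]

theorem walkEnd_reverse {n : ℕ} {F : Type*} (M : Maniplex n F) (l : List (Fin n)) (u : F) :
    walkEnd M l.reverse (walkEnd M l u) = u := by
  induction l generalizing u with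
  | nil => rfl
  | cons i t ih =>
      have : walkEnd M (i :: t) u = walkEnd M t (M.r i u) := rfl
      rw [this, List.reverse_cons, walkEnd_append, ih]
      simp [walkEnd, M.invol]

theorem dWalkEnd_eq {n : ℕ} {F : Type*} (M : Maniplex n F) (l : List (Fin n))
    (u : F) (j : ZMod 2) :
    dWalkEnd M l (u, j) = (walkEnd M l u, j + (l.length : ZMod 2)) := by
  induction l generalizing u j with
  | nil => simp [dWalkEnd, walkEnd]
  | cons i t ih =>
      have h1 : dWalkEnd M (i :: t) (u, j) = dWalkEnd M t (M.r i u, j + 1) := rfl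
      have h2 : walkEnd M (i :: t) u = walkEnd M t (M.r i u) := rfl
      rw [h1, h2, ih]
      simp only [List.length_cons, Nat.cast_add, Nat.cast_one]
      exact Prod.ext rfl (by ring)

theorem comm_dWalkEnd {n : ℕ} {F : Type*} (M : Maniplex n F) (g : Equiv.Perm (F × ZMod 2))
    (hg : ∀ (i : Fin n) (p : F × ZMod 2), g (doubleMap M i p) = doubleMap M i (g p))
    (l : List (Fin n)) (p : F × ZMod 2) :
    g (dWalkEnd M l p) = dWalkEnd M l (g p) := by
  induction l generalizing p with
  | nil => rfl
  | cons i t ih =>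
      have h1 : dWalkEnd M (i :: t) p = dWalkEnd M t (doubleMap M i p) := rfl
      have h2 : dWalkEnd M (i :: t) (g p) = dWalkEnd M t (doubleMap M i (g p)) := rfl
      rw [h1, h2, ih, hg]

theorem cover_conn {n : ℕ} {F : Type*} (M : Maniplex n F)
    (hnonor : ∃ (u : F) (l : List (Fin n)), Odd l.length ∧ walkEnd M l u = u)
    (p q : F × ZMod 2) : ∃ l, dWalkEnd M l p = q := by
  obtain ⟨u0, l0, hodd, hclosed⟩ := hnonor
  obtain ⟨l1, h1⟩ := M.conn p.1 q.1
  have h1 : walkEnd M l1 p.1 = q.1 := h1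
  by_cases hpar : p.2 + (l1.length : ZMod 2) = q.2
  · exact ⟨l1, by rw [show p = (p.1, p.2) from rfl, dWalkEnd_eq, h1, hpar]⟩
  · obtain ⟨l2, h2⟩ := M.conn q.1 u0
    have h2 : walkEnd M l2 q.1 = u0 := h2
    refine ⟨l1 ++ (l2 ++ l0 ++ l2.reverse), ?_⟩
    have hc : walkEnd M (l2 ++ l0 ++ l2.reverse) q.1 = q.1 := by
      rw [walkEnd_append, walkEnd_append, h2, hclosed, ← h2, walkEnd_reverse]
    have hlen : ((l2 ++ l0 ++ l2.reverse).length : ZMod 2) = 1 := by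
      obtain ⟨m, hm⟩ := hodd
      simp only [List.length_append, List.length_reverse, hm]
      push_cast
      have : (2 : ZMod 2) = 0 := by decide
      ring_nf
      rw [this]; ring
    rw [show p = (p.1, p.2) from rfl, dWalkEnd_eq, walkEnd_append, h1, hc,
      List.length_append, Nat.cast_add, hlen]
    have : ∀ x y : ZMod 2, x ≠ y → x + 1 = y := by decide
    rw [← add_assoc]
    exact Prod.ext rfl (this _ _ hpar)

/-- Every regular non-orientable maniplex is stable: every colour-preserving
automorphism of its canonical double cover is of the form
`(u, j) ↦ (φ(u), j + a)` for some automorphism `φ` of `M` and some `a ∈ ℤ_2`. -/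
theorem regular_nonorientable_stable {n : ℕ} {F : Type*} (M : Maniplex n F)
    (hreg : ∀ u v : F, ∃ φ : Equiv.Perm F,
      (∀ (i : Fin n) (x : F), φ (M.r i x) = M.r i (φ x)) ∧ φ u = v)
    (hnonor : ∃ (u : F) (l : List (Fin n)), Odd l.length ∧ walkEnd M l u = u) :
    ∀ g : Equiv.Perm (F × ZMod 2),
      (∀ (i : Fin n) (p : F × ZMod 2), g (doubleMap M i p) = doubleMap M i (g p)) →
      ∃ (φ : Equiv.Perm F) (a : ZMod 2),
        (∀ (i : Fin n) (x : F), φ (M.r i x) = M.r i (φ x)) ∧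
        ∀ p : F × ZMod 2, g p = (φ p.1, p.2 + a) := by
  intro g hg
  obtain ⟨u, l0, hodd, hclosed⟩ := hnonor
  set a : ZMod 2 := (g (u, 0)).2 with ha
  obtain ⟨φ, hφ, hφu⟩ := hreg u (g (u, 0)).1
  refine ⟨φ, a, hφ, ?_⟩
  set h : Equiv.Perm (F × ZMod 2) := φ.prodCongr (Equiv.addRight a) with hh
  have hcomm : ∀ (i : Fin n) (p : F × ZMod 2),
      h (doubleMap M i p) = doubleMap M i (h p) := by
    intro i p
    simp only [hh, Equiv.prodCongr_apply, Prod.map, doubleMap, Equiv.coe_addRight, hφ]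
    exact Prod.ext rfl (by ring)
  have hscomm : ∀ (i : Fin n) (p : F × ZMod 2),
      h.symm (doubleMap M i p) = doubleMap M i (h.symm p) := by
    intro i p
    apply h.injective
    rw [Equiv.apply_symm_apply, hcomm, Equiv.apply_symm_apply]
  have hkcomm : ∀ (i : Fin n) (p : F × ZMod 2),
      (g.trans h.symm) (doubleMap M i p) = doubleMap M i ((g.trans h.symm) p) := by
    intro i p
    simp only [Equiv.trans_apply, hg, hscomm]
  have hfix : (g.trans h.symm) (u, 0) = (u, 0) := by
    apply h.injective
    rw [Equiv.trans_apply, Equiv.apply_symm_apply]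
    simp only [hh, Equiv.prodCongr_apply, Prod.map, Equiv.coe_addRight, hφu]
    exact Prod.ext rfl (by simp [ha])
  have hid : ∀ p : F × ZMod 2, (g.trans h.symm) p = p := by
    intro p
    obtain ⟨l, hl⟩ := cover_conn M ⟨u, l0, hodd, hclosed⟩ (u, 0) p
    rw [← hl, comm_dWalkEnd M _ hkcomm, hfix]
  intro p
  have := hid p
  rw [Equiv.trans_apply] at this
  have : g p = h p := by
    apply h.symm.injective
    rw [this, Equiv.symm_apply_apply]
  rw [this]
  rfl
end

section
/- Let M be an n-maniplex with weight function ω: E(M) → ℤ_k and facet ℓ-colouring C. For every x ∈ ℤ_2^ℓ, the cross-cover of the facet F_x of 2^{(M,C)} (with the restricted extended weight ω_C) is isomorphic to M^ω. -/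
/-- The parity sign `σ(x) = (-1)^{number of entries of x equal to 1}` of an
element `x ∈ ℤ_2^ℓ`. -/
def sgn {ℓ : ℕ} (x : Fin ℓ → ZMod 2) : ℤ :=
  (-1) ^ (∑ j, (x j).val)

/-- The `i`-adjacency maps of the colour-coded extension `2^(M,C)` of an
`n`-maniplex `M` with facet colouring `C` (given as a function `Cc` on flags):
flags are pairs `(u, x) ∈ F × ℤ_2^ℓ`, with `(u,x)^i = (u^i, x)` for `i < n` and
`(u,x)^n = (u, x^{C(u)})`, where `x^j` flips the `j`-th coordinate of `x`. -/
def extMap {n ℓ : ℕ} {F : Type*} (M : Maniplex n F) (Cc : F → Fin ℓ) :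
    Fin (n + 1) → F × (Fin ℓ → ZMod 2) → F × (Fin ℓ → ZMod 2) :=
  fun i p =>
    if h : (i : ℕ) < n then (M.r ⟨i, h⟩ p.1, p.2)
    else (p.1, Function.update p.2 (Cc p.1) (p.2 (Cc p.1) + 1))

/-- The extended weight function `ω_C` on the extension `2^(M,C)`: an `i`-edge
with `i < n` at a flag `(u, x)` gets weight `σ(x)·ω_i(u)`, and every `n`-edge
gets weight `0`. -/
def extWeight {n ℓ k : ℕ} {F : Type*} (M : Maniplex n F) (Cc : F → Fin ℓ)
    (ω : Fin n → F → ZMod k) : Fin (n + 1) → F × (Fin ℓ → ZMod 2) → ZMod k :=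
  fun i p => if h : (i : ℕ) < n then sgn p.2 • ω ⟨i, h⟩ p.1 else 0

/-- The `i`-adjacency maps of the cross-cover `(2^(M,C))^{ω_C}`. -/
def extCoverMap {n ℓ k : ℕ} {F : Type*} (M : Maniplex n F) (Cc : F → Fin ℓ)
    (ω : Fin n → F → ZMod k) (i : Fin (n + 1)) :
    (F × (Fin ℓ → ZMod 2)) × ZMod k → (F × (Fin ℓ → ZMod 2)) × ZMod k :=
  fun q => (extMap M Cc i q.1, extWeight M Cc ω i q.1 - q.2)

/-- For every `x ∈ ℤ_2^ℓ`, the cross-cover of the facet `F_x` of `2^(M,C)`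
(whose `i`-adjacency maps, under the identification of `F_x` with `M`, are
`(u, a) ↦ (u^i, σ(x)·ω_i(u) - a)` for the restricted extended weight) is
isomorphic to `M^ω`, via the bijection `(u, a) ↦ (u, σ(x)·a)`. -/
theorem facet_cover_iso {n ℓ k : ℕ} {F : Type*} (M : Maniplex n F)
    (Cc : F → Fin ℓ) (ω : Fin n → F → ZMod k)
    (hC : ∀ i : Fin n, (i : ℕ) + 1 < n → ∀ u, Cc (M.r i u) = Cc u)
    (hω : ∀ i u, ω i (M.r i u) = ω i u) (x : Fin ℓ → ZMod 2) :
    Function.Bijective (fun p : F × ZMod k => ((p.1, sgn x • p.2) : F × ZMod k)) ∧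
      ∀ (i : Fin n) (p : F × ZMod k),
        ((M.r i p.1, sgn x • (sgn x • ω i p.1 - p.2)) : F × ZMod k) =
          coverMap M ω i (p.1, sgn x • p.2) := by
  have hsq : sgn x * sgn x = 1 := by
    simp only [sgn, ← pow_add, ← two_mul, pow_mul, neg_one_sq, one_pow]
  have hss : ∀ c : ZMod k, sgn x • sgn x • c = c := by
    intro c; rw [smul_smul, hsq, one_smul]
  constructor
  · constructor
    · rintro ⟨u, a⟩ ⟨v, b⟩ h
      simp only [Prod.mk.injEq] at h
      obtain ⟨h1, h2⟩ := h
      have := congrArg (fun c => sgn x • c) h2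
      simp only [hss] at this
      exact Prod.ext h1 this
    · rintro ⟨u, a⟩
      refine ⟨(u, sgn x • a), ?_⟩
      simp only [Prod.mk.injEq, true_and]
      exact hss a
  · intro i p
    simp only [coverMap, Prod.mk.injEq, true_and, smul_sub, hss]
end

section
/- Let M be an n-maniplex, C an ℓ-colouring of its facets, and ω a k-weight function for M. If the cross-cover M^ω is connected, then the cross-cover (2^{(M,C)})^{ω_C} is connected. -/

lemma sgn_mul_self {ℓ : ℕ} (x : Fin ℓ → ZMod 2) : sgn x * sgn x = 1 := by
  unfold sgn
  rw [← pow_add]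
  exact Even.neg_one_pow ⟨_, rfl⟩

lemma sgn_smul_smul {ℓ k : ℕ} (x : Fin ℓ → ZMod 2) (a : ZMod k) :
    sgn x • sgn x • a = a := by
  rw [smul_smul, sgn_mul_self, one_smul]

lemma lift_fold {n ℓ k : ℕ} {F : Type*} (M : Maniplex n F) (Cc : F → Fin ℓ)
    (ω : Fin n → F → ZMod k) (l : List (Fin n)) :
    ∀ (u : F) (x : Fin ℓ → ZMod 2) (a : ZMod k),
    (l.map Fin.castSucc).foldl (fun q i => extCoverMap M Cc ω i q) ((u, x), a)
      = (((l.foldl (fun p i => coverMap M ω i p) (u, sgn x • a)).1, x),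
         sgn x • (l.foldl (fun p i => coverMap M ω i p) (u, sgn x • a)).2) := by
  induction l with
  | nil =>
    intro u x a
    simp only [List.map_nil, List.foldl_nil]
    rw [sgn_smul_smul]
  | cons i t ih =>
    intro u x a
    have hstep : extCoverMap M Cc ω i.castSucc ((u, x), a)
        = ((M.r i u, x), sgn x • ω i u - a) := by
      simp [extCoverMap, extMap, extWeight, i.isLt]
    have harg : sgn x • (sgn x • ω i u - a) = ω i u - sgn x • a := by
      rw [smul_sub, sgn_smul_smul]
    have hcov : coverMap M ω i (u, sgn x • a) = (M.r i u, ω i u - sgn x • a) := rfl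
    simp only [List.map_cons, List.foldl_cons, hstep, hcov]
    rw [ih, harg]

lemma layer_conn {n ℓ k : ℕ} {F : Type*} (M : Maniplex n F) (Cc : F → Fin ℓ)
    (ω : Fin n → F → ZMod k)
    (hconn : ∀ p q : F × ZMod k,
      ∃ l : List (Fin n), l.foldl (fun x i => coverMap M ω i x) p = q)
    (u v : F) (x : Fin ℓ → ZMod 2) (a b : ZMod k) :
    ∃ L : List (Fin (n + 1)),
      L.foldl (fun q i => extCoverMap M Cc ω i q) ((u, x), a) = ((v, x), b) := by
  obtain ⟨l, hl⟩ := hconn (u, sgn x • a) (v, sgn x • b)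
  refine ⟨l.map Fin.castSucc, ?_⟩
  rw [lift_fold, hl]
  simp only
  rw [sgn_smul_smul]

lemma nstep_eq {n ℓ k : ℕ} {F : Type*} (M : Maniplex n F) (Cc : F → Fin ℓ)
    (ω : Fin n → F → ZMod k) (w : F) (x : Fin ℓ → ZMod 2) (a : ZMod k) :
    extCoverMap M Cc ω (Fin.last n) ((w, x), a)
      = ((w, Function.update x (Cc w) (x (Cc w) + 1)), -a) := by
  simp [extCoverMap, extMap, extWeight]

lemma zmod2_ne_add_one (a b : ZMod 2) (h : a ≠ b) : a + 1 = b := by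
  revert h; revert a b; decide

/-- If the cross-cover `M^ω` is connected, then the cross-cover
`(2^(M,C))^{ω_C}` of the colour-coded extension is connected. -/
theorem extension_cover_connected {n ℓ k : ℕ} {F : Type*} (M : Maniplex n F)
    (Cc : F → Fin ℓ) (ω : Fin n → F → ZMod k)
    (hC : ∀ i : Fin n, (i : ℕ) + 1 < n → ∀ u, Cc (M.r i u) = Cc u)
    (hCsurj : Function.Surjective Cc)
    (hω : ∀ i u, ω i (M.r i u) = ω i u)
    (hconn : ∀ p q : F × ZMod k,
      ∃ l : List (Fin n), l.foldl (fun x i => coverMap M ω i x) p = q) :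
    ∀ P Q : (F × (Fin ℓ → ZMod 2)) × ZMod k,
      ∃ L : List (Fin (n + 1)),
        L.foldl (fun x i => extCoverMap M Cc ω i x) P = Q := by
  intro P Q
  obtain ⟨⟨v, y⟩, b⟩ := Q
  suffices h : ∀ m : ℕ, ∀ (u : F) (x : Fin ℓ → ZMod 2) (a : ZMod k),
      (Finset.univ.filter (fun j => x j ≠ y j)).card = m →
      ∃ L : List (Fin (n + 1)),
        L.foldl (fun q i => extCoverMap M Cc ω i q) ((u, x), a) = ((v, y), b) by
    obtain ⟨⟨u, x⟩, a⟩ := P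
    exact h _ u x a rfl
  intro m
  induction m with
  | zero =>
    intro u x a hm
    have hxy : x = y := by
      funext j
      by_contra hj
      have hmem : j ∈ Finset.univ.filter (fun j => x j ≠ y j) := by simp [hj]
      rw [Finset.card_eq_zero] at hm
      simp [hm] at hmem
    subst hxy
    exact layer_conn M Cc ω hconn u v x a b
  | succ m ih =>
    intro u x a hm
    have hne : (Finset.univ.filter (fun j => x j ≠ y j)).Nonempty := by
      rw [← Finset.card_pos, hm]; omega
    obtain ⟨j, hj⟩ := hne
    have hxj : x j ≠ y j := by simpa using hj
    obtain ⟨w, hw⟩ := hCsurj j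
    set x' := Function.update x j (x j + 1) with hx'
    have hx'j : x' j = y j := by
      rw [hx', Function.update_self]
      exact zmod2_ne_add_one _ _ hxj
    have hfilter : Finset.univ.filter (fun j' => x' j' ≠ y j')
        = (Finset.univ.filter (fun j' => x j' ≠ y j')).erase j := by
      ext j'
      by_cases h : j' = j
      · subst h
        simp [hx'j]
      · simp [hx', Function.update_of_ne h, h]
    have hcard : (Finset.univ.filter (fun j' => x' j' ≠ y j')).card = m := by
      rw [hfilter, Finset.card_erase_of_mem hj, hm]
      omega
    obtain ⟨L1, h1⟩ := layer_conn M Cc ω hconn u w x a a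
    obtain ⟨L2, h2⟩ := ih w x' (-a) hcard
    refine ⟨L1 ++ Fin.last n :: L2, ?_⟩
    rw [List.foldl_append, h1, List.foldl_cons, nstep_eq, hw, ← hx', h2]
end

section
/- Let M be a non-orientable regular map of type {p,q} with p odd, and let ϑ: E(M) → ℤ_4 give weight 0 to 1-edges and weight 1 to 0-edges and 2-edges. Then the cross-cover M^ϑ is a connected non-bipartite graph satisfying the string property; that is, M^ϑ is a non-orientable 3-maniplex. -/
/-- A map (3-maniplex) is regular if its colour-preserving automorphism group
is transitive on flags. -/
def ManiplexRegular {n : ℕ} {F : Type*} (M : Maniplex n F) : Prop :=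
  ∀ u v : F, ∃ φ : Equiv.Perm F,
    (∀ (i : Fin n) (x : F), φ (M.r i x) = M.r i (φ x)) ∧ φ u = v

/-- A map (3-maniplex) is non-orientable iff its flag graph is non-bipartite,
i.e. it contains a closed walk of odd length. -/
def NonOrientable {n : ℕ} {F : Type*} (M : Maniplex n F) : Prop :=
  ∃ (u : F) (l : List (Fin n)), Odd l.length ∧ walkEnd M l u = u

/-- A map is of type `{p,q}` if every component of the subgraph induced by the
colours `0,1` is a cycle of length `2p`, and every component of the subgraph
induced by the colours `1,2` is a cycle of length `2q`:  the rotations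
`r₁ ∘ r₀` and `r₂ ∘ r₁` have all orbits of size exactly `p`, resp. `q`, and
there are no multiple edges. -/
def MapOfType {F : Type*} (M : Maniplex 3 F) (p q : ℕ) : Prop :=
  (∀ u : F,
      (fun w => M.r 1 (M.r 0 w))^[p] u = u ∧
      (∀ t, 0 < t → t < p → (fun w => M.r 1 (M.r 0 w))^[t] u ≠ u) ∧
      M.r 0 u ≠ M.r 1 u) ∧
  (∀ u : F,
      (fun w => M.r 2 (M.r 1 w))^[q] u = u ∧
      (∀ t, 0 < t → t < q → (fun w => M.r 2 (M.r 1 w))^[t] u ≠ u) ∧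
      M.r 1 u ≠ M.r 2 u)

/-- The weight function `ϑ : E(M) → ℤ_4` giving weight `0` to `1`-edges and
weight `1` to the `0`-edges and `2`-edges. -/
def vartheta {F : Type*} : Fin 3 → F → ZMod 4 :=
  fun i _ => if i = 1 then 0 else 1

section Aux

variable {F : Type*} (M : Maniplex 3 F)

/-- Abbreviation for the fold defining walks in the cross-cover. -/
def cfold (l : List (Fin 3)) (P : F × ZMod 4) : F × ZMod 4 :=
  l.foldl (fun x i => coverMap M vartheta i x) P

lemma cfold_eq : ∀ (l : List (Fin 3)) (u : F) (a : ZMod 4),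
    cfold M l (u, a)
      = (walkEnd M l u, (cfold M l (u, 0)).2 + (-1) ^ l.length * a)
  | [], u, a => by simp [cfold, walkEnd]
  | i :: t, u, a => by
    have h1 : cfold M (i :: t) (u, a) = cfold M t (M.r i u, vartheta i u - a) := rfl
    have h2 : cfold M (i :: t) (u, 0) = cfold M t (M.r i u, vartheta i u - 0) := rfl
    have hw : walkEnd M (i :: t) u = walkEnd M t (M.r i u) := rfl
    rw [h1, h2, hw, cfold_eq t (M.r i u) (vartheta i u - a),
      cfold_eq t (M.r i u) (vartheta i u - 0)]
    refine Prod.ext rfl ?_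
    simp only [List.length_cons, pow_succ]
    ring

/-- The `[0,1]`-walk repeated `n` times. -/
def fw : ℕ → List (Fin 3)
  | 0 => []
  | n + 1 => 0 :: 1 :: fw n

lemma fw_length : ∀ n, (fw n).length = 2 * n
  | 0 => rfl
  | n + 1 => by simp [fw, fw_length n]; ring

lemma fw_fold : ∀ (n : ℕ) (u : F) (a : ZMod 4),
    cfold M (fw n) (u, a) = ((fun w => M.r 1 (M.r 0 w))^[n] u, a - n)
  | 0, u, a => by simp [fw, cfold]
  | n + 1, u, a => by
    have h1 : cfold M (fw (n + 1)) (u, a)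
        = cfold M (fw n) (M.r 1 (M.r 0 u), vartheta 1 (M.r 0 u) - (vartheta 0 u - a)) := rfl
    rw [h1, fw_fold n (M.r 1 (M.r 0 u))]
    refine Prod.ext ?_ ?_
    · simp [Function.iterate_succ_apply]
    · have hv0 : vartheta (0 : Fin 3) u = 1 := rfl
      have hv1 : vartheta (1 : Fin 3) (M.r 0 u) = 0 := rfl
      simp only [hv0, hv1]
      push_cast
      ring

end Aux

/-- Let `M` be a non-orientable regular map of type `{p,q}` with `p` odd.
Then the cross-cover `M^ϑ` is connected, non-bipartite (it contains a closed
walk of odd length), and satisfies the string property; that is, `M^ϑ` is a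
non-orientable 3-maniplex. -/
theorem crossCover_vartheta_nonorientable_maniplex {F : Type*}
    (M : Maniplex 3 F) (p q : ℕ) (htype : MapOfType M p q)
    (hreg : ManiplexRegular M) (hnonor : NonOrientable M) (hp : Odd p) :
    (∀ P Q : F × ZMod 4,
        ∃ l : List (Fin 3), l.foldl (fun x i => coverMap M vartheta i x) P = Q) ∧
    (∃ (P : F × ZMod 4) (l : List (Fin 3)), Odd l.length ∧
        l.foldl (fun x i => coverMap M vartheta i x) P = P) ∧
    (∀ i j : Fin 3, (i : ℕ) + 1 < (j : ℕ) → ∀ P : F × ZMod 4,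
        coverMap M vartheta i (coverMap M vartheta j P) =
          coverMap M vartheta j (coverMap M vartheta i P) ∧
        coverMap M vartheta i P ≠ coverMap M vartheta j P) := by
  have hall : ∀ x : ZMod 4, x = 0 ∨ x = 1 ∨ x = 2 ∨ x = 3 := by decide
  -- p mod 4 is 1 or 3
  have hp4 : ((p : ℕ) : ZMod 4) = 1 ∨ ((p : ℕ) : ZMod 4) = 3 := by
    obtain ⟨j, hj⟩ := hp
    have h4 : p % 4 = 1 ∨ p % 4 = 3 := by omega
    have hc : ((p : ℕ) : ZMod 4) = ((p % 4 : ℕ) : ZMod 4) := (ZMod.natCast_mod p 4).symm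
    rcases h4 with h | h
    · left; rw [hc, h]; rfl
    · right; rw [hc, h]; rfl
  refine ⟨?_, ?_, ?_⟩
  · -- connectivity
    rintro ⟨u, a⟩ ⟨v, b⟩
    obtain ⟨l, hl⟩ := M.conn u v
    have h1 : (cfold M l (u, a)).1 = v := by
      rw [cfold_eq]; exact hl
    set c := (cfold M l (u, a)).2 with hc
    have hPc : cfold M l (u, a) = (v, c) := Prod.ext h1 rfl
    have hk : ∃ k : ℕ, c - ((k * p : ℕ) : ZMod 4) = b := by
      rcases hp4 with hpc | hpc
      · refine ⟨(c - b).val, ?_⟩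
        push_cast
        rw [hpc, mul_one, ZMod.natCast_val, ZMod.cast_id]
        ring
      · refine ⟨(b - c).val, ?_⟩
        push_cast
        rw [hpc, ZMod.natCast_val, ZMod.cast_id]
        have h3 : (3 : ZMod 4) = -1 := by decide
        rw [h3]
        ring
    obtain ⟨k, hk⟩ := hk
    refine ⟨l ++ fw (k * p), ?_⟩
    show cfold M (l ++ fw (k * p)) (u, a) = (v, b)
    have happ : cfold M (l ++ fw (k * p)) (u, a)
        = cfold M (fw (k * p)) (cfold M l (u, a)) := List.foldl_append ..
    rw [happ, hPc, fw_fold]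
    refine Prod.ext ?_ hk
    show (fun w => M.r 1 (M.r 0 w))^[k * p] v = v
    rw [mul_comm, Function.iterate_mul]
    exact Function.iterate_fixed ((htype.1 v).1) k
  · -- odd closed walk
    obtain ⟨u, l, hodd, hend⟩ := hnonor
    set s := (cfold M l (u, 0)).2 with hs
    have hfold : ∀ a : ZMod 4, cfold M l (u, a) = (u, s - a) := by
      intro a
      rw [cfold_eq, hend, hodd.neg_one_pow]
      refine Prod.ext rfl ?_
      ring
    -- the long walk fw p ++ l, for the case s odd
    have hlong : ∀ a : ZMod 4, s - (a - ((p : ℕ) : ZMod 4)) = a →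
        ∃ (P : F × ZMod 4) (lw : List (Fin 3)), Odd lw.length ∧
          lw.foldl (fun x i => coverMap M vartheta i x) P = P := by
      intro a ha
      refine ⟨(u, a), fw p ++ l, ?_, ?_⟩
      · obtain ⟨j, hj⟩ := hodd
        refine ⟨p + j, ?_⟩
        simp [fw_length, hj]
        ring
      · show cfold M (fw p ++ l) (u, a) = (u, a)
        have happ : cfold M (fw p ++ l) (u, a)
            = cfold M l (cfold M (fw p) (u, a)) := List.foldl_append ..
        rw [happ, fw_fold, (htype.1 u).1, hfold]
        exact Prod.ext rfl ha
    rcases hall s with h0 | h1 | h2 | h3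
    · refine ⟨(u, 0), l, hodd, ?_⟩
      show cfold M l (u, 0) = (u, 0)
      rw [hfold, h0]; norm_num
    · rcases hp4 with hpc | hpc
      · exact hlong 1 (by rw [h1, hpc]; decide)
      · exact hlong 0 (by rw [h1, hpc]; decide)
    · refine ⟨(u, 1), l, hodd, ?_⟩
      show cfold M l (u, 1) = (u, 1)
      rw [hfold, h2]; norm_num
    · rcases hp4 with hpc | hpc
      · exact hlong 0 (by rw [h3, hpc]; decide)
      · exact hlong 1 (by rw [h3, hpc]; decide)
  · -- string property
    intro i j hij P
    obtain ⟨u, a⟩ := P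
    have hj3 : (j : ℕ) < 3 := j.isLt
    have hi0 : i = 0 := Fin.ext (by simp; omega)
    have hj2 : j = 2 := Fin.ext (by simp; omega)
    subst hi0; subst hj2
    have hcomm := M.stringComm 0 2 (by norm_num) u
    have hne := M.stringNe 0 2 (by norm_num) u
    constructor
    · show ((M.r 0 (M.r 2 u), vartheta 0 (M.r 2 u) - (vartheta 2 u - a)) : F × ZMod 4)
        = (M.r 2 (M.r 0 u), vartheta 2 (M.r 0 u) - (vartheta 0 u - a))
      refine Prod.ext hcomm ?_
      show (1 : ZMod 4) - (1 - a) = 1 - (1 - a)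
      rfl
    · intro heq
      exact hne (congrArg Prod.fst heq)
end
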